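/- arXiv:2403.03999 — 4 statements merged into one kernel-verified Lean document; each statement's English description precedes it below -/
import Mathlib

section
/- Let P > 0, let w₁* ∈ (0, P), set w₂* := P − w₁*, and let δ, q > 0 satisfy δ < P/w₁* and |w₂*/w₁* − q| < δ. Define n̄₁ := P/(1 + q). Then |n̄₁ − w₁*| ≤ δ·w₁*/(P/w₁* − δ). -/
/-- The zero-drift split induced by a `δ`-accurate rational approximation `q`
of the optimal ratio `w₂*/w₁*` is within `δ·w₁*/(P/w₁* − δ)` of `w₁*`. -/
theorem approx_split_error (P w₁s δ q : ℝ) (hP : 0 < P)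
    (hw : w₁s ∈ Set.Ioo 0 P) (hδ : 0 < δ) (hq : 0 < q)
    (hδP : δ < P / w₁s) (happrox : |(P - w₁s) / w₁s - q| < δ) :
    |P / (1 + q) - w₁s| ≤ δ * w₁s / (P / w₁s - δ) := by
  obtain ⟨hw0, hwP⟩ := hw
  have h1q : 0 < 1 + q := by linarith
  have hA : 0 < P / w₁s - δ := by linarith
  have key : P / (1 + q) - w₁s = w₁s * ((P - w₁s) / w₁s - q) / (1 + q) := by
    field_simp
    ring
  rw [key, abs_div, abs_mul, abs_of_pos hw0, abs_of_pos h1q]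
  have hqlow : 1 + q ≥ P / w₁s - δ := by
    have h1 : (P - w₁s) / w₁s - q < δ := (abs_lt.mp happrox).2
    have h2 : (P - w₁s) / w₁s = P / w₁s - 1 := by field_simp
    linarith
  rw [mul_comm δ w₁s]
  exact div_le_div₀ (by positivity)
    (mul_le_mul_of_nonneg_left happrox.le hw0.le) hA hqlow
end

section
/- Let P > 0, let w₁* ∈ (0, P), set w₂* := P − w₁*, and let δ, q > 0 satisfy δ < P/w₁* and |w₂*/w₁* − q| < δ. Define n̄₁ := P/(1 + q) and n̄₂ := P − n̄₁. Let C : ℝ × ℝ → ℝ be Lipschitz continuous with constant L_C with respect to the supremum norm on ℝ × ℝ, and suppose C(w₁*, w₂*) > 0. Then C(n̄₁, n̄₂)/C(w₁*, w₂*) ≤ 1 + (L_C/C(w₁*, w₂*))·δ·w₁*/(P/w₁* − δ). -/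
/-! The zero-drift split lies on the same line `x₁ + x₂ = P` as `w*`, so its sup-distance from `w*`
is `|n̄₁ - w₁*| = w₁* |w₂*/w₁* - q| / (1 + q)`. The accuracy of `q` bounds the numerator by `w₁* δ`
and the denominator from below by `1 + w₂*/w₁* - δ = P/w₁* - δ`; the Lipschitz bound on `C` then
gives `C(n̄) ≤ C(w*) + L_C · δ w₁* / (P/w₁* - δ)`. -/

lemma Prod.dist_mk_sub_mk_sub (P a b : ℝ) : dist (a, P - a) (b, P - b) = dist a b := by
  rw [Prod.dist_eq, dist_sub_left, max_self]

lemma sub_lt_one_add_of_abs_div_sub_lt {P w δ q : ℝ} (hw : 0 < w)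
    (happrox : |(P - w) / w - q| < δ) : P / w - δ < 1 + q := by
  have hratio : (P - w) / w = P / w - 1 := by field_simp
  linarith [(abs_sub_lt_iff.mp happrox).1]

lemma div_one_add_sub_eq {P w q : ℝ} (hw : w ≠ 0) (hq : 1 + q ≠ 0) :
    P / (1 + q) - w = w * ((P - w) / w - q) / (1 + q) := by
  field_simp
  ring

lemma abs_div_one_add_sub_le {P w δ q : ℝ} (hw : 0 < w) (hδP : δ < P / w)
    (happrox : |(P - w) / w - q| < δ) : |P / (1 + q) - w| ≤ δ * w / (P / w - δ) := by
  have hlower := sub_lt_one_add_of_abs_div_sub_lt hw happrox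
  have hq : 0 < 1 + q := by linarith
  rw [div_one_add_sub_eq hw.ne' hq.ne', abs_div, abs_mul, abs_of_pos hw, abs_of_pos hq]
  calc w * |(P - w) / w - q| / (1 + q) ≤ w * δ / (1 + q) := by gcongr
    _ ≤ δ * w / (P / w - δ) := by
      have hδ : 0 < δ := (abs_nonneg _).trans_lt happrox
      rw [mul_comm]
      gcongr

lemma div_le_one_add_div_mul {a c L d : ℝ} (hc : 0 < c) (h : a ≤ c + L * d) :
    a / c ≤ 1 + L / c * d := by
  rwa [div_le_iff₀ hc, add_mul, one_mul, mul_right_comm, div_mul_cancel₀ _ hc.ne']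

theorem price_of_anarchy_bound_general (P w₁s δ q : ℝ)
    (hw : w₁s ∈ Set.Ioo 0 P)
    (hδP : δ < P / w₁s) (happrox : |(P - w₁s) / w₁s - q| < δ)
    (C : ℝ × ℝ → ℝ) (L_C : NNReal) (hLip : LipschitzWith L_C C)
    (hC : 0 < C (w₁s, P - w₁s)) :
    C (P / (1 + q), P - P / (1 + q)) / C (w₁s, P - w₁s)
      ≤ 1 + ((L_C : ℝ) / C (w₁s, P - w₁s)) * δ * w₁s / (P / w₁s - δ) := by
  have hdist : dist (P / (1 + q), P - P / (1 + q)) (w₁s, P - w₁s) ≤ δ * w₁s / (P / w₁s - δ) := by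
    rw [Prod.dist_mk_sub_mk_sub, Real.dist_eq]
    exact abs_div_one_add_sub_le hw.1 hδP happrox
  rw [mul_assoc, mul_div_assoc]
  apply div_le_one_add_div_mul hC
  calc C (P / (1 + q), P - P / (1 + q))
      ≤ C (w₁s, P - w₁s) + L_C * dist (P / (1 + q), P - P / (1 + q)) (w₁s, P - w₁s) :=
        hLip.le_add_mul _ _
    _ ≤ C (w₁s, P - w₁s) + L_C * (δ * w₁s / (P / w₁s - δ)) := by gcongr

/-- Price-of-anarchy bound: for a Lipschitz societal cost `C` (w.r.t. the sup
norm on `ℝ × ℝ`) with `C(w*) > 0`, the cost of the zero-drift split induced by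
a `δ`-accurate rational approximation `q` of `w₂*/w₁*` satisfies
`C(n̄)/C(w*) ≤ 1 + (L_C/C(w*))·δ·w₁*/(P/w₁* − δ)`. -/
theorem price_of_anarchy_bound (P w₁s δ q : ℝ) (hP : 0 < P)
    (hw : w₁s ∈ Set.Ioo 0 P) (hδ : 0 < δ) (hq : 0 < q)
    (hδP : δ < P / w₁s) (happrox : |(P - w₁s) / w₁s - q| < δ)
    (C : ℝ × ℝ → ℝ) (L_C : NNReal) (hLip : LipschitzWith L_C C)
    (hC : 0 < C (w₁s, P - w₁s)) :
    C (P / (1 + q), P - P / (1 + q)) / C (w₁s, P - w₁s)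
      ≤ 1 + ((L_C : ℝ) / C (w₁s, P - w₁s)) * δ * w₁s / (P / w₁s - δ) :=
  price_of_anarchy_bound_general P w₁s δ q hw hδP happrox C L_C hLip hC
end

section
/- Let (Ω, 𝔽, P) be a probability space, let B > 0, and let K₀ and (K_t)_{t∈ℕ} be random variables with values in [0, B] almost surely. Let p₁ > 0 > p₂ be real numbers, and let (N_t)_{t∈ℕ} and (N¹_t)_{t∈ℕ} be nonnegative random variables such that almost surely 0 ≤ N¹_t ≤ N_t and K_t = K₀ + p₁·N¹_t + p₂·(N_t − N¹_t), and such that N_t/t converges in probability to a constant P₀ > 0. Define n̄ := −p₂/(p₁ − p₂). Then for every ε > 0, lim_{t→∞} P(|N¹_t − n̄·N_t| > ε·N_t) = 0; i.e., the fraction N¹_t/N_t of plays of strategy {1} converges in probability to n̄. -/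
open MeasureTheory Filter

/-!
Eliminating `N − N¹` from the budget identity gives `N¹_t − n̄ N_t = (K_t − K₀)/(p₁ − p₂)`,
so the deviation from the zero-drift fraction stays bounded by `B/(p₁ − p₂)` whatever `t` is.
A deviation exceeding `ε N_t` therefore forces `N_t < B/(ε(p₁ − p₂))`, and since `N_t` grows
like `P₀ t`, such a bounded value of `N_t` has vanishing probability.
-/

theorem abs_sub_zero_drift_mul_le {B k₀ k p₁ p₂ n n₁ : ℝ} (hp : p₂ < p₁)
    (hk₀ : k₀ ∈ Set.Icc 0 B) (hk : k ∈ Set.Icc 0 B)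
    (hbudget : k = k₀ + p₁ * n₁ + p₂ * (n - n₁)) :
    |n₁ - (-p₂ / (p₁ - p₂)) * n| ≤ B / (p₁ - p₂) := by
  have hpp : 0 < p₁ - p₂ := sub_pos.mpr hp
  have hdev : n₁ - (-p₂ / (p₁ - p₂)) * n = (k - k₀) / (p₁ - p₂) := by
    field_simp
    linarith
  rw [hdev, abs_div, abs_of_pos hpp]
  gcongr
  rw [abs_le]
  constructor <;> linarith [hk₀.1, hk₀.2, hk.1, hk.2]

section ConvergenceInProbability

variable {Ω : Type*} [MeasurableSpace Ω] {P : Measure Ω} {N : ℕ → Ω → ℝ} {P₀ : ℝ}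

theorem tendsto_measure_lt_const_of_tendsto_div (hP₀ : 0 < P₀)
    (hconv : ∀ η > 0,
      Tendsto (fun t : ℕ => P {ω | |N t ω / (t : ℝ) - P₀| > η}) atTop (nhds 0))
    (a : ℝ) :
    Tendsto (fun t : ℕ => P {ω | N t ω < a}) atTop (nhds 0) := by
  refine tendsto_nhds_bot_mono (hconv (P₀ / 2) (half_pos hP₀)) ?_
  obtain ⟨T, hT⟩ := exists_nat_ge (2 * a / P₀)
  filter_upwards [eventually_ge_atTop (max T 1)] with t ht
  refine measure_mono fun ω (hω : N t ω < a) => ?_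
  have htpos : (0 : ℝ) < t := by exact_mod_cast (le_max_right T 1).trans ht
  have haT : a ≤ P₀ / 2 * t := by
    have : 2 * a / P₀ ≤ t := hT.trans (by exact_mod_cast (le_max_left T 1).trans ht)
    rw [div_le_iff₀ hP₀] at this
    linarith
  have hsmall : N t ω / t < P₀ / 2 := by
    rw [div_lt_iff₀ htpos]
    linarith
  show P₀ / 2 < |N t ω / t - P₀|
  rw [lt_abs]
  right
  linarith

theorem tendsto_measure_abs_gt_mul_of_ae_abs_le {X : ℕ → Ω → ℝ} {c : ℝ}
    (hX : ∀ t, ∀ᵐ ω ∂P, |X t ω| ≤ c) (hP₀ : 0 < P₀)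
    (hconv : ∀ η > 0,
      Tendsto (fun t : ℕ => P {ω | |N t ω / (t : ℝ) - P₀| > η}) atTop (nhds 0))
    {ε : ℝ} (hε : 0 < ε) :
    Tendsto (fun t : ℕ => P {ω | |X t ω| > ε * N t ω}) atTop (nhds 0) := by
  refine tendsto_nhds_bot_mono
    (tendsto_measure_lt_const_of_tendsto_div hP₀ hconv (c / ε)) (Eventually.of_forall fun t => ?_)
  refine measure_mono_ae ?_
  filter_upwards [hX t] with ω hω (hgt : ε * N t ω < |X t ω|)
  show N t ω < c / ε
  rw [lt_div_iff₀ hε]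
  linarith

end ConvergenceInProbability

theorem strategy_fraction_convergence_general {Ω : Type*} [MeasurableSpace Ω]
    (P : Measure Ω)
    (B : ℝ)
    (K₀ : Ω → ℝ) (K : ℕ → Ω → ℝ)
    (hK₀ : ∀ᵐ ω ∂P, K₀ ω ∈ Set.Icc 0 B)
    (hK : ∀ t : ℕ, ∀ᵐ ω ∂P, K t ω ∈ Set.Icc 0 B)
    (p₁ p₂ : ℝ) (hp₁ : 0 < p₁) (hp₂ : p₂ < 0)
    (N N1 : ℕ → Ω → ℝ)
    (hrel : ∀ t : ℕ, ∀ᵐ ω ∂P,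
      0 ≤ N1 t ω ∧ N1 t ω ≤ N t ω ∧
      K t ω = K₀ ω + p₁ * N1 t ω + p₂ * (N t ω - N1 t ω))
    (P₀ : ℝ) (hP₀ : 0 < P₀)
    (hconv : ∀ η > 0,
      Tendsto (fun t : ℕ => P {ω | |N t ω / (t : ℝ) - P₀| > η}) atTop (nhds 0)) :
    ∀ ε > 0,
      Tendsto
        (fun t : ℕ =>
          P {ω | |N1 t ω - (-p₂ / (p₁ - p₂)) * N t ω| > ε * N t ω})
        atTop (nhds 0) := by
  have hdev : ∀ t, ∀ᵐ ω ∂P, |N1 t ω - (-p₂ / (p₁ - p₂)) * N t ω| ≤ B / (p₁ - p₂) := fun t => by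
    filter_upwards [hK₀, hK t, hrel t] with ω h₀ hₜ ⟨_, _, hbudget⟩
    exact abs_sub_zero_drift_mul_le (hp₂.trans hp₁) h₀ hₜ hbudget
  exact fun ε hε => tendsto_measure_abs_gt_mul_of_ae_abs_le hdev hP₀ hconv hε

/-- Convergence in probability of the fraction of plays of strategy 1 to the
zero-drift fraction `n̄ = −p₂/(p₁ − p₂)`: if the AC level
`K_t = K₀ + p₁N¹_t + p₂(N_t − N¹_t)` stays almost surely in `[0, B]` and
`N_t/t → P₀ > 0` in probability, then `P(|N¹_t − n̄·N_t| > ε·N_t) → 0`. -/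
theorem strategy_fraction_convergence {Ω : Type*} [MeasurableSpace Ω]
    (P : Measure Ω) [IsProbabilityMeasure P]
    (B : ℝ) (hB : 0 < B)
    (K₀ : Ω → ℝ) (K : ℕ → Ω → ℝ)
    (hK₀meas : Measurable K₀) (hKmeas : ∀ t, Measurable (K t))
    (hK₀ : ∀ᵐ ω ∂P, K₀ ω ∈ Set.Icc 0 B)
    (hK : ∀ t : ℕ, ∀ᵐ ω ∂P, K t ω ∈ Set.Icc 0 B)
    (p₁ p₂ : ℝ) (hp₁ : 0 < p₁) (hp₂ : p₂ < 0)
    (N N1 : ℕ → Ω → ℝ)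
    (hNmeas : ∀ t, Measurable (N t)) (hN1meas : ∀ t, Measurable (N1 t))
    (hrel : ∀ t : ℕ, ∀ᵐ ω ∂P,
      0 ≤ N1 t ω ∧ N1 t ω ≤ N t ω ∧
      K t ω = K₀ ω + p₁ * N1 t ω + p₂ * (N t ω - N1 t ω))
    (P₀ : ℝ) (hP₀ : 0 < P₀)
    (hconv : ∀ η > 0,
      Tendsto (fun t : ℕ => P {ω | |N t ω / (t : ℝ) - P₀| > η}) atTop (nhds 0)) :
    ∀ ε > 0,
      Tendsto
        (fun t : ℕ =>
          P {ω | |N1 t ω - (-p₂ / (p₁ - p₂)) * N t ω| > ε * N t ω})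
        atTop (nhds 0) :=
  strategy_fraction_convergence_general P B K₀ K hK₀ hK p₁ p₂ hp₁ hp₂ N N1 hrel P₀ hP₀ hconv
end

section
/- Let (Ω, 𝔽, P) be a probability space, let 0 < w_min, and let W : Ω → ℝ be a random variable with W ≥ w_min almost surely. Let P₀ ∈ (0, 1], let 0 ≤ l₁ ≤ l₂ be reals, let δ > 0, and let N, N* : Ω → ℝ be measurable with 0 ≤ N ≤ P₀, 0 ≤ N* ≤ P₀, and |N − N*| ≤ δ/P₀ almost surely. Define L := l₂ − (N/P₀)·(l₂ − l₁) and L* := l₂ − (N*/P₀)·(l₂ − l₁), and set D₁ := 2·l₂·(l₂ − l₁)·E[1/W]/(P₀³·w_min) and D₂ := 2·(l₂ − l₁)·(2·l₂ − l₁)·E[1/W²]/P₀². Then |Var(L/W) − Var(L*/W)| ≤ (D₁ + D₂)·δ, and consequently |√Var(L/W) − √Var(L*/W)| ≤ √((D₁ + D₂)·δ). -/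
/-!
Both latencies have the form `U / W` with `|U| ≤ l₂`, and the two numerators differ by at most
`ε = (l₂ - l₁)·δ/P₀²`. Writing `Var X - Var Y = E[X² - Y²] - E[X - Y]·E[X + Y]` and using
`|X - Y| ≤ ε/W`, `|X + Y| ≤ 2l₂/W ≤ 2l₂/w_min` bounds the gap by
`2l₂ε·E[1/W²] + 2l₂ε·E[1/W]/w_min ≤ (D₁ + D₂)·δ`; the bound for standard deviations follows from
`|√a - √b| ≤ √|a - b|`.
-/

open MeasureTheory ProbabilityTheory

theorem Real.sqrt_sub_sqrt_le_sqrt_abs_sub (a b : ℝ) : √a - √b ≤ √|a - b| := by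
  rcases le_total a b with hab | hba
  · linarith [Real.sqrt_le_sqrt hab, Real.sqrt_nonneg |a - b|]
  rw [abs_of_nonneg (sub_nonneg.mpr hba)]
  rcases le_total 0 b with hb | hb
  · have : √a ≤ √b + √(a - b) := by
      rw [Real.sqrt_le_left (by positivity), add_sq, Real.sq_sqrt hb,
        Real.sq_sqrt (sub_nonneg.mpr hba)]
      nlinarith [Real.sqrt_nonneg b, Real.sqrt_nonneg (a - b)]
    linarith
  · rw [Real.sqrt_eq_zero_of_nonpos hb, sub_zero]
    exact Real.sqrt_le_sqrt (by linarith)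

theorem Real.abs_sqrt_sub_sqrt_le_sqrt_abs_sub (a b : ℝ) : |√a - √b| ≤ √|a - b| :=
  abs_sub_le_iff.mpr
    ⟨a.sqrt_sub_sqrt_le_sqrt_abs_sub b, abs_sub_comm a b ▸ b.sqrt_sub_sqrt_le_sqrt_abs_sub a⟩

section variance

variable {Ω : Type*} [MeasurableSpace Ω] {μ : Measure Ω} [IsProbabilityMeasure μ]

theorem ProbabilityTheory.variance_sub_variance_eq {X Y : Ω → ℝ} (hX : MemLp X 2 μ)
    (hY : MemLp Y 2 μ) :
    variance X μ - variance Y μ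
      = ∫ ω, (X ω ^ 2 - Y ω ^ 2) ∂μ - (∫ ω, (X ω - Y ω) ∂μ) * ∫ ω, (X ω + Y ω) ∂μ := by
  have hXi := hX.integrable one_le_two
  have hYi := hY.integrable one_le_two
  rw [variance_eq_sub hX, variance_eq_sub hY, integral_sub hX.integrable_sq hY.integrable_sq,
    integral_sub hXi hYi, integral_add hXi hYi]
  simp only [Pi.pow_apply]
  ring

theorem ProbabilityTheory.abs_variance_sub_variance_le {X Y f h : Ω → ℝ} {M : ℝ}
    (hX : MemLp X 2 μ) (hY : MemLp Y 2 μ) (hf : Integrable f μ) (hh : Integrable h μ)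
    (hsq : ∀ᵐ ω ∂μ, |X ω ^ 2 - Y ω ^ 2| ≤ f ω) (hdiff : ∀ᵐ ω ∂μ, |X ω - Y ω| ≤ h ω)
    (hsum : ∀ᵐ ω ∂μ, |X ω + Y ω| ≤ M) :
    |variance X μ - variance Y μ| ≤ ∫ ω, f ω ∂μ + (∫ ω, h ω ∂μ) * M := by
  have hsq' : |∫ ω, (X ω ^ 2 - Y ω ^ 2) ∂μ| ≤ ∫ ω, f ω ∂μ :=
    norm_integral_le_of_norm_le (f := fun ω => X ω ^ 2 - Y ω ^ 2) hf hsq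
  have hdiff' : |∫ ω, (X ω - Y ω) ∂μ| ≤ ∫ ω, h ω ∂μ :=
    norm_integral_le_of_norm_le (f := fun ω => X ω - Y ω) hh hdiff
  have hsum' : |∫ ω, (X ω + Y ω) ∂μ| ≤ M := by
    simpa using norm_integral_le_of_norm_le (f := fun ω => X ω + Y ω) (integrable_const M) hsum
  rw [variance_sub_variance_eq hX hY]
  calc _ ≤ |∫ ω, (X ω ^ 2 - Y ω ^ 2) ∂μ| + |∫ ω, (X ω - Y ω) ∂μ| * |∫ ω, (X ω + Y ω) ∂μ| := by
        rw [← abs_mul]; exact abs_sub _ _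
    _ ≤ _ := by gcongr; exact (abs_nonneg _).trans hdiff'


theorem ProbabilityTheory.abs_variance_div_sub_variance_div_le {U V W : Ω → ℝ} {K ε m : ℝ}
    (hm : 0 < m) (hU : AEMeasurable U μ) (hV : AEMeasurable V μ) (hW : AEMeasurable W μ)
    (hWm : ∀ᵐ ω ∂μ, m ≤ W ω) (hUK : ∀ᵐ ω ∂μ, |U ω| ≤ K) (hVK : ∀ᵐ ω ∂μ, |V ω| ≤ K)
    (hUV : ∀ᵐ ω ∂μ, |U ω - V ω| ≤ ε) :
    |variance (fun ω => U ω / W ω) μ - variance (fun ω => V ω / W ω) μ|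
      ≤ 2 * K * ε * ∫ ω, (1 / W ω) ^ 2 ∂μ + 2 * K * ε * (∫ ω, 1 / W ω ∂μ) / m := by
  have hWpos : ∀ᵐ ω ∂μ, 0 < W ω := hWm.mono fun ω hω => hm.trans_le hω
  have hinv : ∀ᵐ ω ∂μ, |1 / W ω| ≤ 1 / m := by
    filter_upwards [hWm, hWpos] with ω hω hω₀
    rw [abs_of_pos (one_div_pos.mpr hω₀)]
    exact one_div_le_one_div_of_le hm hω
  have hinvL2 : MemLp (fun ω => 1 / W ω) 2 μ :=
    MemLp.of_bound (aemeasurable_const.div hW).aestronglyMeasurable _ hinv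
  have hdivL2 {Z : Ω → ℝ} (hZ : AEMeasurable Z μ) (hZK : ∀ᵐ ω ∂μ, |Z ω| ≤ K) :
      MemLp (fun ω => Z ω / W ω) 2 μ := by
    refine MemLp.of_bound (hZ.div hW).aestronglyMeasurable (K * (1 / m)) ?_
    filter_upwards [hZK, hinv] with ω hZω hinvω
    rw [Real.norm_eq_abs, div_eq_mul_one_div, abs_mul]
    exact mul_le_mul hZω hinvω (abs_nonneg _) ((abs_nonneg _).trans hZω)
  refine (abs_variance_sub_variance_le (hdivL2 hU hUK) (hdivL2 hV hVK)
    (hinvL2.integrable_sq.const_mul (2 * K * ε)) ((hinvL2.integrable one_le_two).const_mul ε)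
    (M := 2 * K / m) ?_ ?_ ?_).trans_eq ?_
  · filter_upwards [hUK, hVK, hUV, hWpos] with ω hu hv huv hw
    have hsum : |U ω + V ω| ≤ 2 * K := (abs_add_le _ _).trans (by linarith)
    calc |(U ω / W ω) ^ 2 - (V ω / W ω) ^ 2| = |U ω - V ω| * |U ω + V ω| * (1 / W ω) ^ 2 := by
          rw [← abs_mul, ← abs_of_pos (by positivity : 0 < (1 / W ω) ^ 2), ← abs_mul]
          congr 1; field_simp; ring
      _ ≤ ε * (2 * K) * (1 / W ω) ^ 2 := by
          have hε : 0 ≤ ε := (abs_nonneg _).trans huv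
          gcongr
      _ = 2 * K * ε * (1 / W ω) ^ 2 := by ring
  · filter_upwards [hUV, hWpos] with ω huv hw
    rw [← sub_div, abs_div, abs_of_pos hw, div_eq_mul_one_div]
    gcongr
  · filter_upwards [hUK, hVK, hWm, hWpos] with ω hu hv hwm hw
    rw [← add_div, abs_div, abs_of_pos hw]
    have hK : 0 ≤ K := (abs_nonneg _).trans hu
    calc |U ω + V ω| / W ω ≤ 2 * K / W ω := by gcongr; exact (abs_add_le _ _).trans (by linarith)
      _ ≤ 2 * K / m := by gcongr
  · rw [integral_const_mul, integral_const_mul]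
    ring

end variance

section latency

variable {l₁ l₂ P₀ : ℝ}

theorem abs_latency_le {n : ℝ} (hl₁ : 0 ≤ l₁) (hl : l₁ ≤ l₂) (hP₀ : 0 < P₀)
    (hn : n ∈ Set.Icc 0 P₀) : |l₂ - n / P₀ * (l₂ - l₁)| ≤ l₂ := by
  have h₀ : 0 ≤ n / P₀ := div_nonneg hn.1 hP₀.le
  have h₁ : n / P₀ ≤ 1 := (div_le_one hP₀).mpr hn.2
  exact abs_le.mpr ⟨by nlinarith, by nlinarith⟩

theorem abs_latency_sub_latency_le {n n' δ : ℝ} (hl : l₁ ≤ l₂) (hP₀ : 0 < P₀)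
    (hnn' : |n - n'| ≤ δ / P₀) :
    |(l₂ - n / P₀ * (l₂ - l₁)) - (l₂ - n' / P₀ * (l₂ - l₁))| ≤ (l₂ - l₁) * δ / P₀ ^ 2 := by
  calc |(l₂ - n / P₀ * (l₂ - l₁)) - (l₂ - n' / P₀ * (l₂ - l₁))| = |n - n'| * (l₂ - l₁) / P₀ := by
        rw [show (l₂ - n / P₀ * (l₂ - l₁)) - (l₂ - n' / P₀ * (l₂ - l₁))
            = -((n - n') * (l₂ - l₁) / P₀) by ring, abs_neg, abs_div, abs_mul,
          abs_of_nonneg (sub_nonneg.mpr hl), abs_of_pos hP₀]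
    _ ≤ δ / P₀ * (l₂ - l₁) / P₀ := by gcongr
    _ = (l₂ - l₁) * δ / P₀ ^ 2 := by ring

theorem latency_variance_constants_le {wmin δ I₁ I₂ : ℝ} (hl₁ : 0 ≤ l₁) (hl : l₁ ≤ l₂)
    (hP₀ : P₀ ∈ Set.Ioc 0 1) (hwmin : 0 < wmin) (hδ : 0 ≤ δ) (hI₁ : 0 ≤ I₁) (hI₂ : 0 ≤ I₂) :
    2 * l₂ * ((l₂ - l₁) * δ / P₀ ^ 2) * I₂ + 2 * l₂ * ((l₂ - l₁) * δ / P₀ ^ 2) * I₁ / wmin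
      ≤ (2 * l₂ * (l₂ - l₁) * I₁ / (P₀ ^ 3 * wmin)
        + 2 * (l₂ - l₁) * (2 * l₂ - l₁) * I₂ / P₀ ^ 2) * δ := by
  obtain ⟨hP₀pos, hP₀le⟩ := hP₀
  have hl₂ : 0 ≤ l₂ := hl₁.trans hl
  have hd : 0 ≤ l₂ - l₁ := sub_nonneg.mpr hl
  have hP₀cube : P₀ ^ 3 ≤ P₀ ^ 2 := pow_le_pow_of_le_one hP₀pos.le hP₀le (by norm_num)
  have hsq_term : 2 * l₂ * ((l₂ - l₁) * δ / P₀ ^ 2) * I₂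
      ≤ 2 * (l₂ - l₁) * (2 * l₂ - l₁) * I₂ / P₀ ^ 2 * δ :=
    calc _ = 2 * (l₂ - l₁) * I₂ * δ / P₀ ^ 2 * l₂ := by ring
      _ ≤ 2 * (l₂ - l₁) * I₂ * δ / P₀ ^ 2 * (2 * l₂ - l₁) := by gcongr; linarith
      _ = _ := by ring
  have hmean_term : 2 * l₂ * ((l₂ - l₁) * δ / P₀ ^ 2) * I₁ / wmin
      ≤ 2 * l₂ * (l₂ - l₁) * I₁ / (P₀ ^ 3 * wmin) * δ :=
    calc _ = 2 * l₂ * (l₂ - l₁) * I₁ * δ / wmin / P₀ ^ 2 := by ring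
      _ ≤ 2 * l₂ * (l₂ - l₁) * I₁ * δ / wmin / P₀ ^ 3 := by gcongr
      _ = _ := by ring
  linarith

end latency

/-- Variance bound: the variances of the weight-normalized perceived latencies
under two assignments differing pointwise by at most `δ/P₀` differ by at most
`(D₁ + D₂)·δ`, and their standard deviations by at most `√((D₁ + D₂)·δ)`. -/
theorem perceived_latency_variance_bound {Ω : Type*} [MeasurableSpace Ω]
    (P : Measure Ω) [IsProbabilityMeasure P]
    (wmin : ℝ) (hwmin : 0 < wmin)
    (W : Ω → ℝ) (hWmeas : Measurable W) (hW : ∀ᵐ ω ∂P, wmin ≤ W ω)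
    (P₀ : ℝ) (hP₀ : P₀ ∈ Set.Ioc 0 1)
    (l₁ l₂ : ℝ) (hl₁ : 0 ≤ l₁) (hl : l₁ ≤ l₂)
    (δ : ℝ) (hδ : 0 < δ)
    (N Ns : Ω → ℝ) (hNmeas : Measurable N) (hNsmeas : Measurable Ns)
    (hN : ∀ᵐ ω ∂P, N ω ∈ Set.Icc 0 P₀) (hNs : ∀ᵐ ω ∂P, Ns ω ∈ Set.Icc 0 P₀)
    (hdiff : ∀ᵐ ω ∂P, |N ω - Ns ω| ≤ δ / P₀)
    (D₁ D₂ : ℝ)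
    (hD₁ : D₁ = 2 * l₂ * (l₂ - l₁) * (∫ ω, 1 / W ω ∂P) / (P₀ ^ 3 * wmin))
    (hD₂ : D₂ = 2 * (l₂ - l₁) * (2 * l₂ - l₁) * (∫ ω, (1 / W ω) ^ 2 ∂P) / P₀ ^ 2) :
    |variance (fun ω => (l₂ - (N ω / P₀) * (l₂ - l₁)) / W ω) P
        - variance (fun ω => (l₂ - (Ns ω / P₀) * (l₂ - l₁)) / W ω) P|
      ≤ (D₁ + D₂) * δ ∧
    |Real.sqrt (variance (fun ω => (l₂ - (N ω / P₀) * (l₂ - l₁)) / W ω) P)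
        - Real.sqrt (variance (fun ω => (l₂ - (Ns ω / P₀) * (l₂ - l₁)) / W ω) P)|
      ≤ Real.sqrt ((D₁ + D₂) * δ) := by
  have hlatency {M : Ω → ℝ} (hM : ∀ᵐ ω ∂P, M ω ∈ Set.Icc 0 P₀) :
      ∀ᵐ ω ∂P, |l₂ - M ω / P₀ * (l₂ - l₁)| ≤ l₂ :=
    hM.mono fun ω hω => abs_latency_le hl₁ hl hP₀.1 hω
  have hvar := abs_variance_div_sub_variance_div_le hwmin (by fun_prop) (by fun_prop)
    hWmeas.aemeasurable hW (hlatency hN) (hlatency hNs)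
    (hdiff.mono fun ω hω => abs_latency_sub_latency_le hl hP₀.1 hω)
  have hI₁ : 0 ≤ ∫ ω, 1 / W ω ∂P :=
    integral_nonneg_of_ae (hW.mono fun ω hω => one_div_nonneg.mpr (hwmin.le.trans hω))
  have hI₂ : 0 ≤ ∫ ω, (1 / W ω) ^ 2 ∂P := integral_nonneg fun ω => sq_nonneg _
  have hmain : _ ≤ (D₁ + D₂) * δ := hvar.trans <| hD₁ ▸ hD₂ ▸
    latency_variance_constants_le hl₁ hl hP₀ hwmin hδ.le hI₁ hI₂
  exact ⟨hmain, (Real.abs_sqrt_sub_sqrt_le_sqrt_abs_sub _ _).trans (Real.sqrt_le_sqrt hmain)⟩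
end
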